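/- Suppose ψ_n ∈ H¹(ℝ) with ‖ψ_n'‖_{L²(ℝ)} → 0 as n → ∞, and suppose the values ψ_n(0) are uniformly bounded. Then for any continuous compactly supported function w with ∫_ℝ w dx < 0, one has limsup_n ∫_ℝ w ψ_n² dx ≤ 0. In particular it is impossible that ∫_ℝ w ψ_n² dx = 1 for all n. -/

import Mathlib

/-! By Cauchy–Schwarz, `|ψ_n x - ψ_n 0| ≤ ‖ψ_n'‖₂ √|x|`, so on the compact support of `w` the
function `ψ_n²` is uniformly close to `ψ_n(0)²`:
`∫ w ψ_n² = ψ_n(0)² ∫ w + O(‖ψ_n'‖₂² + |ψ_n(0)| ‖ψ_n'‖₂)`.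
The main term is `≤ 0` because `∫ w < 0`, and the error tends to `0` because `ψ_n(0)` is bounded. -/

open MeasureTheory Filter

/-- `ψ ∈ H¹(ℝ)` with weak derivative `ψ'`. -/
def IsH1 (ψ ψ' : ℝ → ℝ) : Prop :=
  MemLp ψ 2 volume ∧ MemLp ψ' 2 volume ∧
    ∀ x : ℝ, ψ x = ψ 0 + ∫ t in (0:ℝ)..x, ψ' t

open Topology

lemma setIntegral_abs_le_sqrt_integral_sq_mul_sqrt {α : Type*} [MeasurableSpace α]
    {μ : Measure α} {f : α → ℝ} {s : Set α} (hs : μ s ≠ ⊤) (hf : MemLp f 2 μ) :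
    ∫ x in s, |f x| ∂μ ≤ √(∫ x, f x ^ 2 ∂μ) * √(μ.real s) := by
  have : IsFiniteMeasure (μ.restrict s) := isFiniteMeasure_restrict.2 hs
  have hf' : MemLp f (ENNReal.ofReal 2) (μ.restrict s) := by simpa using hf.restrict s
  have holder := integral_mul_norm_le_Lp_mul_Lq Real.HolderConjugate.two_two hf'
    (memLp_const (1 : ℝ))
  simp only [norm_one, mul_one, one_pow, integral_const, smul_eq_mul, Real.rpow_two,
    Real.norm_eq_abs, sq_abs, measureReal_restrict_apply_univ] at holder
  calc ∫ x in s, |f x| ∂μ ≤ √(∫ x in s, f x ^ 2 ∂μ) * √(μ.real s) := by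
        simpa only [Real.sqrt_eq_rpow, one_div] using holder
    _ ≤ √(∫ x, f x ^ 2 ∂μ) * √(μ.real s) := by
        gcongr
        exacts [.of_forall fun x => sq_nonneg _, hf.integrable_sq, Measure.restrict_le_self]

lemma abs_intervalIntegral_le_sqrt_integral_sq_mul_sqrt {f : ℝ → ℝ} (hf : MemLp f 2) (a b : ℝ) :
    |∫ t in a..b, f t| ≤ √(∫ t, f t ^ 2) * √|b - a| := by
  have hvol : volume (Set.uIoc a b) ≠ ⊤ := by simp [Real.volume_uIoc]
  calc |∫ t in a..b, f t| ≤ ∫ t in Set.uIoc a b, |f t| := by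
        simpa only [Real.norm_eq_abs] using
          intervalIntegral.norm_integral_le_integral_norm_uIoc (f := f)
    _ ≤ √(∫ t, f t ^ 2) * √(volume.real (Set.uIoc a b)) :=
        setIntegral_abs_le_sqrt_integral_sq_mul_sqrt hvol hf
    _ = √(∫ t, f t ^ 2) * √|b - a| := by
        rw [measureReal_def, Real.volume_uIoc, ENNReal.toReal_ofReal (abs_nonneg _)]

namespace IsH1

variable {ψ ψ' : ℝ → ℝ}

lemma abs_sub_le (h : IsH1 ψ ψ') (x : ℝ) :
    |ψ x - ψ 0| ≤ √(∫ t, ψ' t ^ 2) * √|x| := by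
  simpa [h.2.2 x] using abs_intervalIntegral_le_sqrt_integral_sq_mul_sqrt h.2.1 0 x

lemma continuous (h : IsH1 ψ ψ') : Continuous ψ := by
  have hloc : LocallyIntegrable ψ' volume := h.2.1.locallyIntegrable (by norm_num)
  have hprim := intervalIntegral.continuous_primitive
    (fun a b => (hloc.integrableOn_isCompact isCompact_uIcc).intervalIntegrable) 0
  rw [funext h.2.2]
  exact continuous_const.add hprim

end IsH1

lemma abs_integral_mul_sq_sub_le {X : Type*} [TopologicalSpace X] [MeasurableSpace X]
    [OpensMeasurableSpace X] {μ : Measure X} [IsFiniteMeasureOnCompacts μ]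
    {w φ ρ : X → ℝ} {a e : ℝ} (hw : Continuous w) (hwsupp : HasCompactSupport w)
    (hφ : Continuous φ) (hρ : Continuous ρ)
    (hφa : ∀ x, |φ x - a| ≤ e * ρ x) :
    |∫ x, w x * φ x ^ 2 ∂μ - a ^ 2 * ∫ x, w x ∂μ| ≤
      e ^ 2 * ∫ x, |w x| * ρ x ^ 2 ∂μ + 2 * |a| * e * ∫ x, |w x| * ρ x ∂μ := by
  have hwφ : Integrable (fun x => w x * φ x ^ 2) μ :=
    (hw.mul (hφ.pow 2)).integrable_of_hasCompactSupport hwsupp.mul_right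
  have hwρ2 : Integrable (fun x => |w x| * ρ x ^ 2) μ :=
    (hw.abs.mul (hρ.pow 2)).integrable_of_hasCompactSupport hwsupp.abs.mul_right
  have hwρ : Integrable (fun x => |w x| * ρ x) μ :=
    (hw.abs.mul hρ).integrable_of_hasCompactSupport hwsupp.abs.mul_right
  have hpointwise : ∀ x, ‖w x * φ x ^ 2 - a ^ 2 * w x‖ ≤
      e ^ 2 * (|w x| * ρ x ^ 2) + 2 * |a| * e * (|w x| * ρ x) := fun x => by
    have hsum : |φ x + a| ≤ e * ρ x + 2 * |a| := by
      calc |φ x + a| = |(φ x - a) + 2 * a| := by congr 1; ring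
        _ ≤ |φ x - a| + 2 * |a| := by simpa [abs_mul] using abs_add_le (φ x - a) (2 * a)
        _ ≤ e * ρ x + 2 * |a| := by gcongr; exact hφa x
    calc ‖w x * φ x ^ 2 - a ^ 2 * w x‖ = |w x| * (|φ x - a| * |φ x + a|) := by
          rw [Real.norm_eq_abs, ← abs_mul, ← abs_mul]; congr 1; ring
      _ ≤ |w x| * (e * ρ x * (e * ρ x + 2 * |a|)) := by
          gcongr
          · exact (abs_nonneg _).trans (hφa x)
          · exact hφa x
      _ = e ^ 2 * (|w x| * ρ x ^ 2) + 2 * |a| * e * (|w x| * ρ x) := by ring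
  calc |∫ x, w x * φ x ^ 2 ∂μ - a ^ 2 * ∫ x, w x ∂μ|
      = ‖∫ x, (w x * φ x ^ 2 - a ^ 2 * w x) ∂μ‖ := by
        rw [integral_sub hwφ ((hw.integrable_of_hasCompactSupport hwsupp).const_mul _),
          integral_const_mul, Real.norm_eq_abs]
    _ ≤ ∫ x, (e ^ 2 * (|w x| * ρ x ^ 2) + 2 * |a| * e * (|w x| * ρ x)) ∂μ :=
        norm_integral_le_of_norm_le ((hwρ2.const_mul _).add (hwρ.const_mul _))
          (.of_forall hpointwise)
    _ = e ^ 2 * ∫ x, |w x| * ρ x ^ 2 ∂μ + 2 * |a| * e * ∫ x, |w x| * ρ x ∂μ := by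
        rw [integral_add (hwρ2.const_mul _) (hwρ.const_mul _),
          integral_const_mul, integral_const_mul]

-- A real `limsup` that is not cobounded takes the junk value `0`.
lemma Real.limsup_le_of_eventually_le_of_tendsto {ι : Type*} {f : Filter ι} [f.NeBot]
    {u g : ι → ℝ} {l : ℝ} (hl : 0 ≤ l) (hug : u ≤ᶠ[f] g) (hg : Tendsto g f (𝓝 l)) :
    limsup u f ≤ l := by
  by_cases hu : f.IsCoboundedUnder (· ≤ ·) u
  · exact (limsup_le_limsup hug hu hg.isBoundedUnder_le).trans_eq hg.limsup_eq
  · rwa [Real.limsup_of_not_isCoboundedUnder hu]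

/-- If `ψ_n ∈ H¹(ℝ)`, `‖ψ_n'‖_{L²} → 0` and `ψ_n(0)` is uniformly bounded, then for any
`w ∈ C⁰_c(ℝ)` with `∫ w < 0` one has `limsup_n ∫ w ψ_n² ≤ 0`; in particular it is impossible
that `∫ w ψ_n² = 1` for all `n`. -/
theorem statement2 (ψ ψ' : ℕ → ℝ → ℝ) (hH1 : ∀ n, IsH1 (ψ n) (ψ' n))
    (hderiv : Tendsto (fun n => ∫ x, (ψ' n x) ^ 2) atTop (nhds 0))
    (hbdd : ∃ c : ℝ, ∀ n, |ψ n 0| ≤ c)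
    (w : ℝ → ℝ) (hw : Continuous w) (hwsupp : HasCompactSupport w)
    (hwneg : (∫ x, w x) < 0) :
    limsup (fun n => ∫ x, w x * (ψ n x) ^ 2) atTop ≤ 0 ∧
      ¬ (∀ n, (∫ x, w x * (ψ n x) ^ 2) = 1) := by
  obtain ⟨c, hc⟩ := hbdd
  set ε := fun n => √(∫ x, ψ' n x ^ 2)
  set A := ∫ x, |w x| * √|x| ^ 2
  set B := ∫ x, |w x| * √|x|
  have hB : 0 ≤ B := integral_nonneg fun x => by positivity
  have hbound : ∀ n, ∫ x, w x * ψ n x ^ 2 ≤ ε n ^ 2 * A + 2 * c * ε n * B := fun n => by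
    have hclose : |(∫ x, w x * ψ n x ^ 2) - ψ n 0 ^ 2 * ∫ x, w x| ≤
        ε n ^ 2 * A + 2 * |ψ n 0| * ε n * B :=
      abs_integral_mul_sq_sub_le hw hwsupp (hH1 n).continuous (by fun_prop) (hH1 n).abs_sub_le
    have hmain : ψ n 0 ^ 2 * ∫ x, w x ≤ 0 := mul_nonpos_of_nonneg_of_nonpos (sq_nonneg _) hwneg.le
    have hcross : 2 * |ψ n 0| * ε n * B ≤ 2 * c * ε n * B := by gcongr; exact hc n
    linarith [le_abs_self ((∫ x, w x * ψ n x ^ 2) - ψ n 0 ^ 2 * ∫ x, w x)]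
  have hε : Tendsto ε atTop (𝓝 0) := by simpa using hderiv.sqrt
  have hlimsup : limsup (fun n => ∫ x, w x * ψ n x ^ 2) atTop ≤ 0 :=
    Real.limsup_le_of_eventually_le_of_tendsto le_rfl (.of_forall hbound)
      (by simpa using ((hε.pow 2).mul_const A).add ((hε.const_mul (2 * c)).mul_const B))
  refine ⟨hlimsup, fun hone => ?_⟩
  rw [funext hone, limsup_const] at hlimsup
  exact one_pos.not_ge hlimsup
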